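/- A maximal family of pairwise nonpositively correlated unit vectors in ℝ^d of size 2d must be of the form {±v_1, …, ±v_d} for an orthonormal basis v_1,…,v_d: if 2d unit vectors in ℝ^d have pairwise nonpositive inner products, then they split into d antipodal pairs that are mutually orthogonal. -/

import Mathlib

/-!
Fix a member `v` of the family and project the members off the line `ℝ ∙ v` onto `(ℝ ∙ v)ᗮ`.
Since `⟪P x, P y⟫ = ⟪x, y⟫ - ⟪v, x⟫ ⟪v, y⟫ / ‖v‖²` and both `⟪v, x⟫, ⟪v, y⟫ ≤ 0`, the projections
still have pairwise nonpositive inner products; in particular they are distinct. At most two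
members lie on the line, so induction on the dimension bounds the family by `2 · dim`. In the case
of equality a second member lies on the line `ℝ ∙ v`, and for unit vectors it can only be `-v`.
Finally `⟪v, w⟫ ≤ 0` and `⟪-v, w⟫ ≤ 0` force `⟪v, w⟫ = 0` for members of different pairs.
-/

open RealInnerProductSpace Module Submodule Finset

section

variable {E : Type*} [NormedAddCommGroup E] [InnerProductSpace ℝ E]

theorem inner_orthogonalProjectionOnto_orthogonal_span_singleton (v x y : E) :
    ⟪(ℝ ∙ v)ᗮ.orthogonalProjectionOnto x, (ℝ ∙ v)ᗮ.orthogonalProjectionOnto y⟫ =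
      ⟪x, y⟫ - ⟪v, x⟫ * ⟪v, y⟫ / ‖v‖ ^ 2 := by
  rw [inner_orthogonalProjectionOnto_eq_of_mem_left, orthogonalProjectionOnto_orthogonal]
  simp only [starProjection_singleton, inner_sub_left, real_inner_smul_left,
    RCLike.ofReal_real_eq_id, id]
  ring

theorem inner_orthogonalProjectionOnto_orthogonal_span_singleton_le {v x y : E}
    (hx : ⟪v, x⟫ ≤ 0) (hy : ⟪v, y⟫ ≤ 0) :
    ⟪(ℝ ∙ v)ᗮ.orthogonalProjectionOnto x, (ℝ ∙ v)ᗮ.orthogonalProjectionOnto y⟫ ≤ ⟪x, y⟫ := by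
  have : 0 ≤ ⟪v, x⟫ * ⟪v, y⟫ / ‖v‖ ^ 2 := by
    have := mul_nonneg_of_nonpos_of_nonpos hx hy
    positivity
  rw [inner_orthogonalProjectionOnto_orthogonal_span_singleton]
  linarith

open scoped Classical in
theorem exists_pairwise_inner_nonpos_in_orthogonal_span_singleton {s : Finset E}
    (hs : (s : Set E).Pairwise (⟪·, ·⟫ ≤ 0)) {v : E} (hv : v ∈ s) :
    ∃ t : Finset (ℝ ∙ v)ᗮ, #t = #{x ∈ s | x ∉ ℝ ∙ v} ∧ 0 ∉ t ∧
      (t : Set (ℝ ∙ v)ᗮ).Pairwise (⟪·, ·⟫ ≤ 0) := by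
  set u := {x ∈ s | x ∉ ℝ ∙ v}
  set P := (ℝ ∙ v)ᗮ.orthogonalProjectionOnto
  have hP0 : ∀ x ∈ u, P x ≠ 0 := by
    intro x hx
    rw [Ne, orthogonalProjectionOnto_eq_zero_iff, orthogonal_orthogonal]
    exact (mem_filter.1 hx).2
  have hPu : ∀ x ∈ u, ∀ y ∈ u, x ≠ y → ⟪P x, P y⟫ ≤ 0 := by
    intro x hx y hy hxy
    rw [mem_filter] at hx hy
    have hvx : v ≠ x := fun h => hx.2 (h ▸ mem_span_singleton_self v)
    have hvy : v ≠ y := fun h => hy.2 (h ▸ mem_span_singleton_self v)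
    exact (inner_orthogonalProjectionOnto_orthogonal_span_singleton_le (hs hv hx.1 hvx)
      (hs hv hy.1 hvy)).trans (hs hx.1 hy.1 hxy)
  refine ⟨u.image P, card_image_of_injOn fun x hx y hy hPxy => ?_, ?_, ?_⟩
  · by_contra hxy
    have := hPu x hx y hy hxy
    rw [← hPxy, real_inner_self_nonpos] at this
    exact hP0 x hx this
  · simpa only [mem_image, not_exists, not_and] using hP0
  · rw [coe_image]
    rintro _ ⟨x, hx, rfl⟩ _ ⟨y, hy, rfl⟩ hxy
    exact hPu x hx y hy (fun h => hxy (h ▸ rfl))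

open scoped Classical in
theorem card_filter_mem_span_singleton_le_two {s : Finset E} (h0 : 0 ∉ s)
    (hs : (s : Set E).Pairwise (⟪·, ·⟫ ≤ 0)) (v : E) : #{x ∈ s | x ∈ ℝ ∙ v} ≤ 2 := by
  -- The product of the pairwise inner products of three nonzero collinear vectors is positive.
  by_contra! h
  obtain ⟨a, b, c, ha, hb, hc, hab, hac, hbc⟩ := two_lt_card_iff.1 h
  simp only [mem_filter, mem_span_singleton] at ha hb hc
  obtain ⟨ha, α, rfl⟩ := ha
  obtain ⟨hb, β, rfl⟩ := hb
  obtain ⟨hc, γ, rfl⟩ := hc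
  have hab' := hs ha hb hab
  have hac' := hs ha hc hac
  have hbc' := hs hb hc hbc
  simp only [real_inner_smul_left, real_inner_smul_right, real_inner_self_eq_norm_sq]
    at hab' hac' hbc'
  obtain ⟨hα, hv⟩ := smul_ne_zero_iff.1 (ne_of_mem_of_not_mem ha h0)
  obtain ⟨hβ, -⟩ := smul_ne_zero_iff.1 (ne_of_mem_of_not_mem hb h0)
  obtain ⟨hγ, -⟩ := smul_ne_zero_iff.1 (ne_of_mem_of_not_mem hc h0)
  have hpos : 0 < (α * (β * ‖v‖ ^ 2)) * (α * (γ * ‖v‖ ^ 2)) * (β * (γ * ‖v‖ ^ 2)) := by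
    have : (α * (β * ‖v‖ ^ 2)) * (α * (γ * ‖v‖ ^ 2)) * (β * (γ * ‖v‖ ^ 2)) =
        (α * β * γ) ^ 2 * (‖v‖ ^ 2) ^ 3 := by ring
    rw [this]
    positivity
  have := mul_nonpos_of_nonneg_of_nonpos (mul_nonneg_of_nonpos_of_nonpos hab' hac') hbc'
  linarith

theorem finrank_orthogonal_span_singleton_add_one [FiniteDimensional ℝ E] {v : E} (hv : v ≠ 0) :
    finrank ℝ (ℝ ∙ v)ᗮ + 1 = finrank ℝ E := by
  rw [← finrank_add_finrank_orthogonal (ℝ ∙ v), finrank_span_singleton hv, add_comm]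

theorem card_le_two_mul_finrank_of_pairwise_inner_nonpos [FiniteDimensional ℝ E] {s : Finset E}
    (h0 : 0 ∉ s) (hs : (s : Set E).Pairwise (⟪·, ·⟫ ≤ 0)) : #s ≤ 2 * finrank ℝ E := by
  classical
  induction hn : finrank ℝ E using Nat.strong_induction_on generalizing E with
  | _ n ih =>
  obtain rfl | ⟨v, hv⟩ := s.eq_empty_or_nonempty
  · simp
  have hW := finrank_orthogonal_span_singleton_add_one (ne_of_mem_of_not_mem hv h0)
  obtain ⟨t, ht, ht0, hts⟩ := exists_pairwise_inner_nonpos_in_orthogonal_span_singleton hs hv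
  have := ih _ (by omega) ht0 hts rfl
  have := card_filter_mem_span_singleton_le_two h0 hs v
  have := card_filter_add_card_filter_not (s := s) (· ∈ ℝ ∙ v)
  omega

theorem exists_mem_span_singleton_of_card_eq_two_mul_finrank [FiniteDimensional ℝ E]
    {s : Finset E} (h0 : 0 ∉ s) (hs : (s : Set E).Pairwise (⟪·, ·⟫ ≤ 0))
    (hcard : #s = 2 * finrank ℝ E) {v : E} (hv : v ∈ s) : ∃ w ∈ s, w ≠ v ∧ w ∈ ℝ ∙ v := by
  classical
  have hW := finrank_orthogonal_span_singleton_add_one (ne_of_mem_of_not_mem hv h0)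
  obtain ⟨t, ht, ht0, hts⟩ := exists_pairwise_inner_nonpos_in_orthogonal_span_singleton hs hv
  have := card_le_two_mul_finrank_of_pairwise_inner_nonpos ht0 hts
  have := card_filter_add_card_filter_not (s := s) (· ∈ ℝ ∙ v)
  obtain ⟨w, hw, hwv⟩ := exists_mem_ne (s := {x ∈ s | x ∈ ℝ ∙ v}) (by omega) v
  exact ⟨w, (mem_filter.1 hw).1, hwv, (mem_filter.1 hw).2⟩

theorem eq_neg_of_mem_span_singleton_of_inner_nonpos {v w : E} (hv : ‖v‖ = 1) (hw : ‖w‖ = 1)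
    (hwv : w ∈ ℝ ∙ v) (h : ⟪w, v⟫ ≤ 0) : w = -v := by
  obtain ⟨c, rfl⟩ := mem_span_singleton.1 hwv
  rw [norm_smul, hv, mul_one, Real.norm_eq_abs] at hw
  rw [real_inner_smul_left, real_inner_self_eq_norm_sq, hv] at h
  rw [show c = -1 by cases abs_cases c <;> linarith, neg_one_smul]

theorem neg_mem_of_card_eq_two_mul_finrank [FiniteDimensional ℝ E] {s : Finset E}
    (hunit : ∀ x ∈ s, ‖x‖ = 1) (hs : (s : Set E).Pairwise (⟪·, ·⟫ ≤ 0))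
    (hcard : #s = 2 * finrank ℝ E) {v : E} (hv : v ∈ s) : -v ∈ s := by
  have h0 : (0 : E) ∉ s := fun h => by simpa using hunit 0 h
  obtain ⟨w, hws, hwv, hw⟩ := exists_mem_span_singleton_of_card_eq_two_mul_finrank h0 hs hcard hv
  rwa [← eq_neg_of_mem_span_singleton_of_inner_nonpos (hunit v hv) (hunit w hws) hw
    (hs hws hv hwv)]

end

/-- A maximal family of `2d` unit vectors in ℝ^d with pairwise nonpositive
inner products splits into `d` antipodal pairs that are mutually orthogonal. -/
theorem maximal_nonpos_family_antipodal_orthogonal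
    (d : ℕ) (v : Fin (2 * d) → EuclideanSpace ℝ (Fin d))
    (hinj : Function.Injective v)
    (hunit : ∀ i, ‖v i‖ = 1)
    (hip : ∀ i j, i ≠ j → ⟪v i, v j⟫ ≤ 0) :
    ∃ f : Fin (2 * d) → Fin (2 * d),
      Function.Involutive f ∧ (∀ i, f i ≠ i) ∧ (∀ i, v (f i) = -v i) ∧
      (∀ i j, j ≠ i → j ≠ f i → ⟪v i, v j⟫ = 0) := by
  classical
  have hcard : #(univ.image v) = 2 * finrank ℝ (EuclideanSpace ℝ (Fin d)) := by
    rw [card_image_of_injective _ hinj, card_univ, Fintype.card_fin, finrank_euclideanSpace_fin]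
  have hs : (↑(univ.image v) : Set (EuclideanSpace ℝ (Fin d))).Pairwise (⟪·, ·⟫ ≤ 0) := by
    rw [coe_image, coe_univ, hinj.injOn.pairwise_image]
    exact fun i _ j _ => hip i j
  have hneg (i) : -v i ∈ univ.image v := neg_mem_of_card_eq_two_mul_finrank
    (by simpa using hunit) hs hcard (mem_image_of_mem v (mem_univ i))
  choose f hf using fun i => by simpa using hneg i
  refine ⟨f, fun i => hinj (by rw [hf, hf, neg_neg]), fun i hfi => ?_, hf, fun i j hji hjf => ?_⟩
  · have := congrArg (⟪v i, ·⟫) (hf i)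
    norm_num [hfi, real_inner_self_eq_norm_sq, hunit] at this
  · have := hip (f i) j hjf.symm
    rw [hf, inner_neg_left] at this
    exact le_antisymm (hip i j hji.symm) (by linarith)
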